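/- Let f : ℝⁿ → ℝ be convex and differentiable with minimizer X⋆, and let X satisfy Ẋ = −∇f(X) with X(0) = X₀. Define E(t) = t(f(X(t)) − f⋆) + (1/2)‖X(t) − X⋆‖² − ‖X₀ − X⋆‖² + ∫₀ᵗ s‖Ẋ(s)‖² ds + ∫₀ᵗ ( f⋆ − f(X(s)) − ⟨∇f(X(s)), X⋆ − X(s)⟩ ) ds. Then E(t) = −(1/2)‖X₀ − X⋆‖² for all t ≥ 0. -/

import Mathlib

open Filter MeasureTheory
open scoped RealInnerProductSpace Topology

/-!
Along the flow `Ẋ = -∇f(X)`, the energy `t (f(X) - f⋆) + ½‖X - X⋆‖²` has derivative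
`-(t‖Ẋ‖² + (f⋆ - f(X) - ⟪∇f(X), X⋆ - X⟫))`, and both terms are nonnegative, the second by
convexity. Integrating over `[0, t]` gives the identity. As `∇f ∘ X` need not be continuous,
the integrability of the two terms comes from the sign of the derivative.
-/

open Set

section Integral

variable {ψ h₁ h₂ : ℝ → ℝ} {a b : ℝ}

-- No integrability is assumed: a derivative of constant sign is integrable, hence so are its
-- nonnegative measurable summands.
theorem integral_add_eq_sub_of_hasDerivAt_neg_add (hab : a ≤ b)
    (hcont : ContinuousOn ψ (Icc a b))
    (hderiv : ∀ x ∈ Ioo a b, HasDerivAt ψ (-(h₁ x + h₂ x)) x)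
    (h₁_nonneg : ∀ x ∈ Ioo a b, 0 ≤ h₁ x) (h₂_nonneg : ∀ x ∈ Ioo a b, 0 ≤ h₂ x)
    (h₁_meas : AEStronglyMeasurable h₁ (volume.restrict (Ioc a b))) :
    (∫ x in a..b, h₁ x) + (∫ x in a..b, h₂ x) = ψ a - ψ b := by
  have hderiv_neg : ∀ x ∈ Ioo a b, HasDerivAt (-ψ) (h₁ x + h₂ x) x :=
    fun x hx => by simpa using (hderiv x hx).neg
  have hsum : IntervalIntegrable (fun x => h₁ x + h₂ x) volume a b := by
    refine intervalIntegral.intervalIntegrable_deriv_of_nonneg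
      (by rw [uIcc_of_le hab]; exact hcont.neg) ?_ ?_ <;> rw [min_eq_left hab, max_eq_right hab]
    · exact hderiv_neg
    · exact fun x hx => add_nonneg (h₁_nonneg x hx) (h₂_nonneg x hx)
  have hIoo : ∀ᵐ x ∂volume.restrict (Ioc a b), x ∈ Ioo a b := by
    rw [← Measure.restrict_congr_set Ioo_ae_eq_Ioc]
    exact ae_restrict_mem measurableSet_Ioo
  have h₁_int : IntervalIntegrable h₁ volume a b := by
    refine hsum.mono_fun' (by rwa [uIoc_of_le hab]) ?_
    rw [uIoc_of_le hab]
    filter_upwards [hIoo] with x hx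
    rw [Real.norm_of_nonneg (h₁_nonneg x hx)]
    linarith [h₂_nonneg x hx]
  have h₂_int : IntervalIntegrable h₂ volume a b := by
    simpa using hsum.sub h₁_int
  rw [← intervalIntegral.integral_add h₁_int h₂_int,
    intervalIntegral.integral_eq_sub_of_hasDerivAt_of_le hab hcont.neg hderiv_neg hsum]
  simp only [Pi.neg_apply]; ring

end Integral

section GradientFlow

variable {E : Type*} [NormedAddCommGroup E] [InnerProductSpace ℝ E] [CompleteSpace E]

theorem HasGradientAt.comp_hasDerivAt {f : E → ℝ} {X : ℝ → E} {d v : E} {t : ℝ}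
    (hf : HasGradientAt f d (X t)) (hX : HasDerivAt X v t) :
    HasDerivAt (fun s => f (X s)) ⟪d, v⟫ t := by
  simpa [InnerProductSpace.toDual_apply_apply, Function.comp_def] using
    hf.hasFDerivAt.comp_hasDerivAt t hX

noncomputable def flowEnergy (f : E → ℝ) (X : ℝ → E) (Xs : E) (t : ℝ) : ℝ :=
  t * (f (X t) - f Xs) + 1 / 2 * ‖X t - Xs‖ ^ 2

theorem hasDerivAt_flowEnergy {f : E → ℝ} {X : ℝ → E} {Xs d v : E} {t : ℝ}
    (hf : HasGradientAt f d (X t)) (hX : HasDerivAt X v t) (hv : v = -d) :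
    HasDerivAt (flowEnergy f X Xs)
      (-(t * ‖v‖ ^ 2 + (f Xs - f (X t) - ⟪d, Xs - X t⟫))) t := by
  have h : HasDerivAt (flowEnergy f X Xs) _ t :=
    ((hasDerivAt_id' t).mul ((hf.comp_hasDerivAt hX).sub_const (f Xs))).add
      (((hX.sub_const Xs).norm_sq).const_mul (1 / 2))
  refine h.congr_deriv ?_
  subst hv
  rw [show Xs - X t = -(X t - Xs) by abel, inner_neg_right, inner_neg_right, inner_neg_right,
    real_inner_self_eq_norm_sq, norm_neg, real_inner_comm]
  ring

end GradientFlow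

theorem gradient_flow_conservation_law_general
    {E : Type*} [NormedAddCommGroup E] [InnerProductSpace ℝ E] [CompleteSpace E]
    (f : E → ℝ) (g : E → E)
    (hgrad : ∀ x, HasGradientAt f (g x) x)
    (hconv : ∀ x y, 0 ≤ f x - f y - ⟪g y, x - y⟫)
    (X X' : ℝ → E)
    (hX' : ∀ t ∈ Set.Ici (0:ℝ), HasDerivAt X (X' t) t)
    (hflow : ∀ t ∈ Set.Ici (0:ℝ), X' t = -(g (X t)))
    (X₀ : E) (hX0 : X 0 = X₀)
    (Xs : E) :
    ∀ t ≥ (0:ℝ),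
      t * (f (X t) - f Xs) + (1 / 2) * ‖X t - Xs‖ ^ 2 - ‖X₀ - Xs‖ ^ 2
        + (∫ s in (0:ℝ)..t, s * ‖X' s‖ ^ 2)
        + (∫ s in (0:ℝ)..t, f Xs - f (X s) - ⟪g (X s), Xs - X s⟫)
      = -(1 / 2) * ‖X₀ - Xs‖ ^ 2 := by
  intro t ht
  have hderiv : ∀ s ∈ Icc 0 t, HasDerivAt (flowEnergy f X Xs)
      (-(s * ‖X' s‖ ^ 2 + (f Xs - f (X s) - ⟪g (X s), Xs - X s⟫))) s :=
    fun s hs => hasDerivAt_flowEnergy (hgrad (X s)) (hX' s hs.1) (hflow s hs.1)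
  have hmeas : AEStronglyMeasurable (fun s => s * ‖X' s‖ ^ 2) (volume.restrict (Ioc 0 t)) := by
    refine (continuous_id.aestronglyMeasurable.mul
      ((stronglyMeasurable_deriv X).aestronglyMeasurable.norm.pow 2)).congr ?_
    filter_upwards [ae_restrict_mem measurableSet_Ioc] with s hs
    simp only [Pi.mul_apply, Pi.pow_apply, id, (hX' s hs.1.le).deriv]
  have key := integral_add_eq_sub_of_hasDerivAt_neg_add ht
    (fun s hs => (hderiv s hs).continuousAt.continuousWithinAt)
    (fun s hs => hderiv s (Ioo_subset_Icc_self hs))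
    (fun s hs => mul_nonneg hs.1.le (sq_nonneg _)) (fun s _ => hconv Xs (X s)) hmeas
  simp only [flowEnergy, hX0, zero_mul, zero_add] at key
  linarith

theorem gradient_flow_conservation_law
    {E : Type*} [NormedAddCommGroup E] [InnerProductSpace ℝ E] [CompleteSpace E]
    (f : E → ℝ) (g : E → E)
    (hgrad : ∀ x, HasGradientAt f (g x) x)
    (hconv : ∀ x y, 0 ≤ f x - f y - ⟪g y, x - y⟫)
    (X X' : ℝ → E)
    (hX' : ∀ t ∈ Set.Ici (0:ℝ), HasDerivAt X (X' t) t)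
    (hflow : ∀ t ∈ Set.Ici (0:ℝ), X' t = -(g (X t)))
    (X₀ : E) (hX0 : X 0 = X₀)
    (Xs : E) (hmin : ∀ x, f Xs ≤ f x) :
    ∀ t ≥ (0:ℝ),
      t * (f (X t) - f Xs) + (1 / 2) * ‖X t - Xs‖ ^ 2 - ‖X₀ - Xs‖ ^ 2
        + (∫ s in (0:ℝ)..t, s * ‖X' s‖ ^ 2)
        + (∫ s in (0:ℝ)..t, f Xs - f (X s) - ⟪g (X s), Xs - X s⟫)
      = -(1 / 2) * ‖X₀ - Xs‖ ^ 2 :=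
  gradient_flow_conservation_law_general f g hgrad hconv X X' hX' hflow X₀ hX0 Xs
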